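/- Define c : ℕ → ℕ → ℕ by c n k = f_{(3n−k, k, 0)} where f and g are as below. Then for all n, the sum over all pairs (a,b,c) of nonnegative integers with a ≥ b ≥ c, a+b+c = 3n of the multiplicity f_{(a,b,c)}, restricted to partitions with at most two parts (c = 0), satisfies: Σ_{k=0}^{⌊3n/2⌋} f_{(3n−k,k,0)} = Σ_{k=0}^{⌊3(n−4)/2⌋} f_{(3(n−4)−k,k,0)} + n (for n ≥ 4), where the extra n counts the terms s_{3n} and s_{3n−k,k} for 2 ≤ k ≤ n. -/

import Mathlib

/-!
Write `t n k = f_{(3n-k,k,0)}`. For `k ≤ n` the minimum defining `a_λ` is `k + 1`, and for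
`k ≥ n` it is `3n - 2k + 1`. Hence passing from `n` to `n + 4` leaves the terms with `k < n`
unchanged, shifts the terms with `k ≥ n` by six places without changing them, and inserts a
window of six new terms `k = n, …, n + 5`. Since `g (i + 6) ω = g i ω + 1`, the window sum grows
by exactly `6` when `n` grows by `6`, so it equals `n + 4` once this is checked for `n < 6`.
-/

/-- The recursive function `g` from the paper. -/
def g (i ω : ℕ) : ℕ :=
  if _ : 6 ≤ i then g (i - 6) ω + 1
  else if ω = 0 then (if i = 0 ∨ i = 2 then 0 else 1)
  else if i = 4 ∧ ω = 1 then 1 else 0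
termination_by i
decreasing_by omega

/-- Thrall's multiplicity `f` for a partition `(l1, l2, l3)` (natural subtraction). -/
def thrallF (l1 l2 l3 : ℕ) : ℕ :=
  g (min (1 + l1 - l2) (1 + l2 - l3)) (l2 % 2)

open Finset

theorem g_add_six (i ω : ℕ) : g (i + 6) ω = g i ω + 1 := by
  rw [g, dif_pos (by omega), Nat.add_sub_cancel]

theorem g_eq_div_add (i ω : ℕ) : g i ω = i / 6 +
    if ω = 0 then (if i % 6 = 0 ∨ i % 6 = 2 then 0 else 1)
    else if i % 6 = 4 ∧ ω = 1 then 1 else 0 := by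
  induction i using Nat.strong_induction_on with
  | _ i ih =>
    by_cases h : 6 ≤ i
    · obtain ⟨j, rfl⟩ := Nat.exists_eq_add_of_le' h
      rw [g_add_six, ih j (by omega), Nat.add_mod_right, Nat.add_div_right _ (by norm_num)]
      omega
    · rw [g, dif_neg h, Nat.mod_eq_of_lt (by omega), Nat.div_eq_of_lt (by omega), zero_add]

theorem thrallF_two_row_add_four_of_le {m k : ℕ} (hk : k ≤ m) :
    thrallF (3 * (m + 4) - k) k 0 = thrallF (3 * m - k) k 0 := by
  unfold thrallF
  congr 1
  omega

theorem thrallF_two_row_add_four_add_six {m k : ℕ} (hk : m ≤ k) :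
    thrallF (3 * (m + 4) - (k + 6)) (k + 6) 0 = thrallF (3 * m - k) k 0 := by
  unfold thrallF
  congr 1 <;> omega

theorem thrallF_two_row_add_six {n k : ℕ} (hk : 2 * k ≤ 3 * n) :
    thrallF (3 * (n + 6) - (k + 6)) (k + 6) 0 = thrallF (3 * n - k) k 0 + 1 := by
  unfold thrallF
  rw [← g_add_six]
  congr 1 <;> omega

theorem sum_thrallF_two_row_window : ∀ m : ℕ,
    ∑ i ∈ range 6, thrallF (3 * (m + 4) - (m + i)) (m + i) 0 = m + 4
  | 0 | 1 | 2 | 3 | 4 | 5 => by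
    simp only [sum_range_succ, thrallF, g_eq_div_add]
    decide
  | m + 6 => by
    have shift : ∀ i ∈ range 6, thrallF (3 * (m + 6 + 4) - (m + 6 + i)) (m + 6 + i) 0 =
        thrallF (3 * (m + 4) - (m + i)) (m + i) 0 + 1 := by
      intro i hi
      rw [mem_range] at hi
      rw [show m + 6 + i = m + i + 6 by ring, show m + 6 + 4 = m + 4 + 6 by ring]
      exact thrallF_two_row_add_six (by omega)
    rw [sum_congr rfl shift, sum_add_distrib, sum_thrallF_two_row_window m]
    simp

theorem thrallF_two_row_sum (n : ℕ) (hn : 4 ≤ n) :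
    (∑ k ∈ Finset.range (3 * n / 2 + 1), thrallF (3 * n - k) k 0) =
      (∑ k ∈ Finset.range (3 * (n - 4) / 2 + 1), thrallF (3 * (n - 4) - k) k 0) + n := by
  obtain ⟨m, rfl⟩ := Nat.exists_eq_add_of_le' hn
  set r := 3 * m / 2 + 1 - m
  have hnew : 3 * (m + 4) / 2 + 1 = m + 6 + r := by omega
  have hold : 3 * (m + 4 - 4) / 2 + 1 = m + r := by omega
  rw [hnew, hold, Nat.add_sub_cancel, sum_range_add, sum_range_add, sum_range_add,
    sum_thrallF_two_row_window]
  have hlow : ∀ k ∈ range m, thrallF (3 * (m + 4) - k) k 0 = thrallF (3 * m - k) k 0 :=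
    fun k hk => thrallF_two_row_add_four_of_le (mem_range.1 hk).le
  have hhigh : ∀ i ∈ range r,
      thrallF (3 * (m + 4) - (m + 6 + i)) (m + 6 + i) 0 = thrallF (3 * m - (m + i)) (m + i) 0 :=
    fun i _ => by rw [← thrallF_two_row_add_four_add_six (by omega : m ≤ m + i), add_right_comm]
  rw [sum_congr rfl hlow, sum_congr rfl hhigh]
  ring
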